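/- Safety for set policies: if N is a well-formed system (coherent and ⊢N:ok), then for every trustworthy site l[M]{P} occurring in N, P →σ P' implies Sset(σ) ⊆ M_p. -/
import Mathlib


universe u

/-! ## Basic framework: trust levels, agents, membranes, systems -/

/-- Trust levels: `loc` (unknown), `lgood`, `lbad`. -/
inductive TrustLev : Type where
  | loc : TrustLev
  | lgood : TrustLev
  | lbad : TrustLev
deriving DecidableEq

/-- The subtyping order `<:` on trust levels: it is reflexive and satisfies
`loc <: lgood` and `loc <: lbad`. -/
def TrustLev.sub (t1 t2 : TrustLev) : Prop := t1 = t2 ∨ t1 = TrustLev.loc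

/-- Agents, parametric on the type `Act` of basic actions, the type `Loc` of
localities, and the type `Pol` of policies (digests carried by `go`). -/
inductive Agent (Act Loc : Type) (Pol : Type u) where
  | nil : Agent Act Loc Pol
  | act : Act → Agent Act Loc Pol → Agent Act Loc Pol
  | go : Loc → Pol → Agent Act Loc Pol → Agent Act Loc Pol
  | par : Agent Act Loc Pol → Agent Act Loc Pol → Agent Act Loc Pol
  | repl : Agent Act Loc Pol → Agent Act Loc Pol

/-- A membrane: a trust function on localities together with a policy.
(The partial trust function is modelled as a total function, the level `loc`
standing for ``unknown''.) -/
structure Membrane (Loc : Type) (Pol : Type u) where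
  trust : Loc → TrustLev
  pol : Pol

/-- Systems: the empty system, a site `l[M]{P}`, or a parallel composition. -/
inductive System (Act Loc : Type) (Pol : Type u) where
  | empty : System Act Loc Pol
  | site : Loc → Membrane Loc Pol → Agent Act Loc Pol → System Act Loc Pol
  | par : System Act Loc Pol → System Act Loc Pol → System Act Loc Pol

variable {Act Loc : Type} {Pol : Type u}

/-- The list of sites (name and membrane) occurring in a system. -/
def System.sites : System Act Loc Pol → List (Loc × Membrane Loc Pol)
  | System.empty => []
  | System.site l M _ => [(l, M)]
  | System.par N1 N2 => N1.sites ++ N2.sites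

/-- A site named `l` with membrane `M` is trustworthy if `M_t(l) = lgood`. -/
def Trustworthy (l : Loc) (M : Membrane Loc Pol) : Prop :=
  M.trust l = TrustLev.lgood

/-- A system is coherent if `M^k_t(l) <: M^l_t(l)` for every trustworthy site `k`
and every site `l` of the system. -/
def Coherent (N : System Act Loc Pol) : Prop :=
  ∀ p ∈ N.sites, Trustworthy p.1 p.2 →
    ∀ q ∈ N.sites, TrustLev.sub (p.2.trust q.1) (q.2.trust q.1)

/-- `SiteIn l M P N` holds when the site `l[M]{P}` occurs in the system `N`. -/
inductive SiteIn (l : Loc) (M : Membrane Loc Pol) (P : Agent Act Loc Pol) :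
    System Act Loc Pol → Prop where
  | here : SiteIn l M P (System.site l M P)
  | left {N1 N2} : SiteIn l M P N1 → SiteIn l M P (System.par N1 N2)
  | right {N1 N2} : SiteIn l M P N2 → SiteIn l M P (System.par N1 N2)

/-- Structural equivalence on agents: `|` is commutative and associative with
unit `nil`, replication unfolds, and `≡` is a congruence for `|`. -/
inductive AgEq : Agent Act Loc Pol → Agent Act Loc Pol → Prop where
  | refl (P) : AgEq P P
  | symm {P Q} : AgEq P Q → AgEq Q P
  | trans {P Q R} : AgEq P Q → AgEq Q R → AgEq P R
  | parNil (P) : AgEq (Agent.par P Agent.nil) P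
  | parComm (P Q) : AgEq (Agent.par P Q) (Agent.par Q P)
  | parAssoc (P Q R) :
      AgEq (Agent.par (Agent.par P Q) R) (Agent.par P (Agent.par Q R))
  | replUnfold (P Q) :
      AgEq (Agent.par (Agent.repl P) Q) (Agent.par P (Agent.par (Agent.repl P) Q))
  | parCong {P P' Q Q'} : AgEq P P' → AgEq Q Q' → AgEq (Agent.par P Q) (Agent.par P' Q')

/-- Structural equivalence on systems. -/
inductive StrEq : System Act Loc Pol → System Act Loc Pol → Prop where
  | refl (N) : StrEq N N
  | symm {N1 N2} : StrEq N1 N2 → StrEq N2 N1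
  | trans {N1 N2 N3} : StrEq N1 N2 → StrEq N2 N3 → StrEq N1 N3
  | parEmpty (N) : StrEq (System.par N System.empty) N
  | parComm (N1 N2) : StrEq (System.par N1 N2) (System.par N2 N1)
  | parAssoc (N1 N2 N3) :
      StrEq (System.par (System.par N1 N2) N3) (System.par N1 (System.par N2 N3))
  | parCong {N1 N1' N2 N2'} :
      StrEq N1 N1' → StrEq N2 N2' → StrEq (System.par N1 N2) (System.par N1' N2')
  | site (l M) {P Q} : AgEq P Q → StrEq (System.site l M P) (System.site l M Q)

/-- The reduction relation over systems, parametric on the `enforces`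
relation `enf` between policies and on the typechecking relation `typ`
between agents and policies.  In rule `mig`, if the target site `l` trusts
the source site `k` then the digest `T` is checked against `l`'s policy,
otherwise the full code `P` is typechecked. -/
inductive Red (enf : Pol → Pol → Prop) (typ : Agent Act Loc Pol → Pol → Prop) :
    System Act Loc Pol → System Act Loc Pol → Prop where
  | act (l M a P Q) :
      Red enf typ (System.site l M (Agent.par (Agent.act a P) Q))
        (System.site l M (Agent.par P Q))
  | par {N1 N1'} (N2) :
      Red enf typ N1 N1' → Red enf typ (System.par N1 N2) (System.par N1' N2)
  | struct {N N1 N1' N'} :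
      StrEq N N1 → Red enf typ N1 N1' → StrEq N1' N' → Red enf typ N N'
  | mig (k Mk l Ml T P Q R) :
      (if Ml.trust k = TrustLev.lgood then enf T Ml.pol else typ P Ml.pol) →
      Red enf typ
        (System.par (System.site k Mk (Agent.par (Agent.go l T P) Q))
          (System.site l Ml R))
        (System.par (System.site k Mk Q) (System.site l Ml (Agent.par P R)))

/-- The labelled transition system over agents, with labels in `Act ⊕ Loc`. -/
inductive Step : Agent Act Loc Pol → (Act ⊕ Loc) → Agent Act Loc Pol → Prop where
  | act (a P) : Step (Agent.act a P) (Sum.inl a) P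
  | mig (l T P) : Step (Agent.go l T P) (Sum.inr l) Agent.nil
  | repl {P α P'} :
      Step (Agent.par P (Agent.repl P)) α P' → Step (Agent.repl P) α P'
  | parL {P1 α P1'} (P2) :
      Step P1 α P1' → Step (Agent.par P1 P2) α (Agent.par P1' P2)
  | parR {P1 α P1'} (P2) :
      Step P1 α P1' → Step (Agent.par P2 P1) α (Agent.par P2 P1')

/-- `Trace P σ P'` means `P →σ P'`: the composite of the single steps of `σ`. -/
inductive Trace : Agent Act Loc Pol → List (Act ⊕ Loc) → Agent Act Loc Pol → Prop where
  | nil (P) : Trace P [] P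
  | cons {P α P' σ P''} : Step P α P' → Trace P' σ P'' → Trace P (α :: σ) P''

/-- The thread components of an agent: every agent is `P1 | ... | Pn`
with each `Pi` a thread (not itself a parallel composition). -/
def Agent.comps : Agent Act Loc Pol → List (Agent Act Loc Pol)
  | Agent.par P Q => P.comps ++ Q.comps
  | P => [P]

/-- A thread is an agent which is not a parallel composition. -/
def Agent.IsThread : Agent Act Loc Pol → Prop
  | Agent.par _ _ => False
  | _ => True

/-! ## Set policies -/

/-- A (set) policy: a finite subset of `Act ⊕ Loc`. -/
abbrev SPolicy (Act Loc : Type) : Type := Finset (Act ⊕ Loc)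

/-- Typechecking of agents against set policies, `⊢ P : T`. -/
inductive Types : Agent Act Loc (SPolicy Act Loc) → SPolicy Act Loc → Prop where
  | nil (T) : Types Agent.nil T
  | act {a P T} : Sum.inl a ∈ T → Types P T → Types (Agent.act a P) T
  | go {l T' P T} : Sum.inr l ∈ T → Types P T' → Types (Agent.go l T' P) T
  | par {P Q T} : Types P T → Types Q T → Types (Agent.par P Q) T
  | repl {P T} : Types P T → Types (Agent.repl P) T

/-- Well-formedness of systems, `⊢ N : ok`, for set policies. -/
inductive Ok : System Act Loc (SPolicy Act Loc) → Prop where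
  | empty : Ok System.empty
  | par {N1 N2} : Ok N1 → Ok N2 → Ok (System.par N1 N2)
  | siteU {l M P} : ¬ Trustworthy l M → Ok (System.site l M P)
  | siteG {l M P} : Trustworthy l M → Types P M.pol → Ok (System.site l M P)

lemma step_types {P : Agent Act Loc (SPolicy Act Loc)} {α P' T}
    (h : Step P α P') (ht : Types P T) : α ∈ T ∧ Types P' T := by
  induction h with
  | act a P => cases ht with | act h1 h2 => exact ⟨h1, h2⟩
  | mig l T' P => cases ht with | go h1 h2 => exact ⟨h1, Types.nil _⟩
  | repl h ih => cases ht with | repl h' => exact ih (Types.par h' (Types.repl h'))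
  | parL P2 h ih =>
      cases ht with | par h1 h2 =>
        obtain ⟨ha, hp⟩ := ih h1; exact ⟨ha, Types.par hp h2⟩
  | parR P2 h ih =>
      cases ht with | par h1 h2 =>
        obtain ⟨ha, hp⟩ := ih h2; exact ⟨ha, Types.par h1 hp⟩

lemma trace_subset {P : Agent Act Loc (SPolicy Act Loc)} {σ P' T}
    (h : Trace P σ P') (ht : Types P T) : ∀ α ∈ σ, α ∈ T := by
  induction h with
  | nil P => simp
  | cons hs htr ih =>
      obtain ⟨ha, hp⟩ := step_types hs ht
      intro β hβ
      rcases List.mem_cons.mp hβ with rfl | hβ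
      · exact ha
      · exact ih hp β hβ

lemma ok_siteIn {N : System Act Loc (SPolicy Act Loc)} {l M P}
    (hok : Ok N) (hs : SiteIn l M P N) (htw : Trustworthy l M) :
    Types P M.pol := by
  induction hs with
  | here => cases hok with
      | siteU h => exact absurd htw h
      | siteG _ h => exact h
  | left _ ih => cases hok with | par h1 h2 => exact ih h1
  | right _ ih => cases hok with | par h1 h2 => exact ih h2

/-- **Safety for set policies**: if `N` is a well-formed system (coherent and
`⊢ N : ok`), then for every trustworthy site `l[M]{P}` occurring in `N`,
`P →σ P'` implies `Sset(σ) ⊆ M_p`. -/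
theorem safety_set [DecidableEq Act] [DecidableEq Loc]
    {N : System Act Loc (SPolicy Act Loc)}
    (hcoh : Coherent N) (hok : Ok N)
    {l : Loc} {M : Membrane Loc (SPolicy Act Loc)} {P : Agent Act Loc (SPolicy Act Loc)}
    (hsite : SiteIn l M P N) (htw : Trustworthy l M)
    {σ : List (Act ⊕ Loc)} {P' : Agent Act Loc (SPolicy Act Loc)}
    (htr : Trace P σ P') :
    σ.toFinset ⊆ M.pol := by
  intro α hα
  exact trace_subset htr (ok_siteIn hok hsite htw) α (List.mem_toFinset.mp hα)
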